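/- The modulo-K process P_{K,m}^N achieves the maximum possible binding information: B(X_{1..N}) = (N-1) log K, and for any random variables Y_1,…,Y_N valued in an alphabet of size K, B(Y_{1..N}) ≤ (N-1) log K. -/
import Mathlib


open scoped Classical
open Finset Real

noncomputable section

/-- Probability of the event `X = s` under weights `p` on a finite sample space. -/
def pr {Ω : Type*} [Fintype Ω] (p : Ω → ℝ) {S : Type*} (X : Ω → S) (s : S) : ℝ :=
  ∑ ω, if X ω = s then p ω else 0

/-- Shannon entropy of a finitely-valued random variable `X`. -/
def ent {Ω : Type*} [Fintype Ω] (p : Ω → ℝ) {S : Type*} [Fintype S] (X : Ω → S) : ℝ :=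
  ∑ s, Real.negMulLog (pr p X s)

/-- Conditional entropy `H(X | Y)`. -/
def condEnt {Ω : Type*} [Fintype Ω] (p : Ω → ℝ) {S T : Type*} [Fintype S] [Fintype T]
    (X : Ω → S) (Y : Ω → T) : ℝ :=
  ent p (fun ω => (X ω, Y ω)) - ent p Y

/-- The joint random variable of a finite family. -/
def jointVar {Ω : Type*} {A : Type*} {S : A → Type*} (X : ∀ α, Ω → S α) :
    Ω → ∀ α, S α :=
  fun ω α => X α ω

/-- The tuple of all variables except `α`. -/
def restVar {Ω : Type*} {A : Type*} {S : A → Type*} (X : ∀ α, Ω → S α) (α : A) :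
    Ω → ∀ β : {β : A // β ≠ α}, S β.1 :=
  fun ω β => X β.1 ω

/-- Binding information `B(X_A)`. -/
def bindingInfo {Ω : Type*} [Fintype Ω] (p : Ω → ℝ) {A : Type*} [Fintype A]
    {S : A → Type*} [∀ α, Fintype (S α)] (X : ∀ α, Ω → S α) : ℝ :=
  ent p (jointVar X) - ∑ α, condEnt p (X α) (restVar X α)

/-- Multi-information `I(X_A)`. -/
def multiInfo {Ω : Type*} [Fintype Ω] (p : Ω → ℝ) {A : Type*} [Fintype A]
    {S : A → Type*} [∀ α, Fintype (S α)] (X : ∀ α, Ω → S α) : ℝ :=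
  (∑ α, ent p (X α)) - ent p (jointVar X)

/-- The modulo-`K` process `P_{K,m}^N`: uniform probability `K^{1-N}` on
configurations `x ∈ {0,…,K-1}^N` with `Σ_i x_i ≡ m (mod K)`. -/
def modP (K N : ℕ) (m : Fin K) : (Fin N → Fin K) → ℝ :=
  fun x => if (∑ i, (x i : ℕ)) % K = (m : ℕ) then ((K : ℝ) ^ (N - 1))⁻¹ else 0


section Aux
variable {Ω : Type*} [Fintype Ω]

variable {Ω : Type*} [Fintype Ω]

lemma pr_nonneg (q : Ω → ℝ) (hq : ∀ ω, 0 ≤ q ω) {S : Type*} (X : Ω → S) (s : S) :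
    0 ≤ pr q X s :=
  Finset.sum_nonneg fun ω _ => by split <;> [exact hq ω; exact le_rfl]

lemma sum_pr (q : Ω → ℝ) {S : Type*} [Fintype S] (X : Ω → S) :
    ∑ s, pr q X s = ∑ ω, q ω := by
  unfold pr
  rw [Finset.sum_comm]
  refine Finset.sum_congr rfl fun ω _ => ?_
  simp

lemma pr_le_one (q : Ω → ℝ) (hq : ∀ ω, 0 ≤ q ω) (hq1 : ∑ ω, q ω = 1)
    {S : Type*} (X : Ω → S) (s : S) : pr q X s ≤ 1 := by
  rw [← hq1]
  refine Finset.sum_le_sum fun ω _ => ?_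
  split <;> [exact le_rfl; exact hq ω]

lemma ent_nonneg (q : Ω → ℝ) (hq : ∀ ω, 0 ≤ q ω) (hq1 : ∑ ω, q ω = 1)
    {S : Type*} [Fintype S] (X : Ω → S) : 0 ≤ ent q X :=
  Finset.sum_nonneg fun s _ =>
    Real.negMulLog_nonneg (pr_nonneg q hq X s) (pr_le_one q hq hq1 X s)

lemma pr_comp {S T : Type*} [Fintype S] (q : Ω → ℝ) (X : Ω → S) (g : S → T) (t : T) :
    pr q (fun ω => g (X ω)) t = ∑ s ∈ Finset.univ.filter (fun s => g s = t), pr q X s := by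
  unfold pr
  rw [Finset.sum_comm]
  refine Finset.sum_congr rfl fun ω _ => ?_
  rw [Finset.sum_ite_eq (Finset.univ.filter (fun s => g s = t)) (X ω) (fun _ => q ω)]
  simp

lemma negMulLog_add_le {x y : ℝ} (hx : 0 ≤ x) (hy : 0 ≤ y) :
    Real.negMulLog (x + y) ≤ Real.negMulLog x + Real.negMulLog y := by
  rcases eq_or_lt_of_le hx with h | h
  · simp [← h]
  rcases eq_or_lt_of_le hy with h' | h'
  · simp [← h']
  have h1 : Real.log x ≤ Real.log (x + y) := Real.log_le_log h (by linarith)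
  have h2 : Real.log y ≤ Real.log (x + y) := Real.log_le_log h' (by linarith)
  simp only [Real.negMulLog]
  nlinarith [mul_le_mul_of_nonneg_left h1 hx, mul_le_mul_of_nonneg_left h2 hy]

lemma negMulLog_sum_le {ι : Type*} (s : Finset ι) (a : ι → ℝ) (ha : ∀ i ∈ s, 0 ≤ a i) :
    Real.negMulLog (∑ i ∈ s, a i) ≤ ∑ i ∈ s, Real.negMulLog (a i) := by
  induction s using Finset.cons_induction with
  | empty => simp [Real.negMulLog]
  | cons i s hi ih =>
    rw [Finset.sum_cons, Finset.sum_cons]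
    have h0 : 0 ≤ ∑ j ∈ s, a j :=
      Finset.sum_nonneg fun j hj => ha j (Finset.mem_cons_of_mem hj)
    calc Real.negMulLog (a i + ∑ j ∈ s, a j)
        ≤ Real.negMulLog (a i) + Real.negMulLog (∑ j ∈ s, a j) :=
          negMulLog_add_le (ha i (Finset.mem_cons_self i s)) h0
      _ ≤ Real.negMulLog (a i) + ∑ j ∈ s, Real.negMulLog (a j) := by
          have := ih fun j hj => ha j (Finset.mem_cons_of_mem hj)
          linarith

lemma ent_comp_le {S T : Type*} [Fintype S] [Fintype T] (q : Ω → ℝ) (hq : ∀ ω, 0 ≤ q ω)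
    (X : Ω → S) (g : S → T) : ent q (fun ω => g (X ω)) ≤ ent q X := by
  unfold ent
  rw [← Finset.sum_fiberwise Finset.univ g (fun s => Real.negMulLog (pr q X s))]
  refine Finset.sum_le_sum fun t _ => ?_
  rw [pr_comp]
  exact negMulLog_sum_le _ _ fun s _ => pr_nonneg q hq X s

lemma ent_comp_eq {S T : Type*} [Fintype S] [Fintype T] (q : Ω → ℝ)
    (X : Ω → S) (g : S → T) (hg : Function.Injective g) :
    ent q (fun ω => g (X ω)) = ent q X := by
  unfold ent
  have h1 : ∀ s, pr q X s = pr q (fun ω => g (X ω)) (g s) := by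
    intro s; unfold pr
    refine Finset.sum_congr rfl fun ω _ => by simp [hg.eq_iff]
  have h2 : ∑ s, Real.negMulLog (pr q X s)
      = ∑ s, Real.negMulLog (pr q (fun ω => g (X ω)) (g s)) :=
    Finset.sum_congr rfl fun s _ => by rw [h1 s]
  have h3 : ∑ s : S, Real.negMulLog (pr q (fun ω => g (X ω)) (g s))
      = ∑ t ∈ Finset.univ.image g, Real.negMulLog (pr q (fun ω => g (X ω)) t) :=
    (Finset.sum_image (f := fun t => Real.negMulLog (pr q (fun ω => g (X ω)) t))
      (fun x _ y _ h => hg h)).symm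
  rw [h2, h3]
  refine (Finset.sum_subset (Finset.subset_univ _) fun t _ ht => ?_).symm
  have : pr q (fun ω => g (X ω)) t = 0 := by
    refine Finset.sum_eq_zero fun ω _ => if_neg fun h => ht ?_
    rw [← h]; exact Finset.mem_image_of_mem g (Finset.mem_univ _)
  rw [this, Real.negMulLog_zero]

lemma ent_le_log_card {S : Type*} [Fintype S] [Nonempty S] (q : Ω → ℝ)
    (hq : ∀ ω, 0 ≤ q ω) (hq1 : ∑ ω, q ω = 1) (X : Ω → S) :
    ent q X ≤ Real.log (Fintype.card S) := by
  set n : ℝ := (Fintype.card S : ℝ) with hn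
  have hnpos : 0 < n := by positivity
  have hj := (Real.strictConcaveOn_negMulLog.concaveOn).le_map_sum
    (t := Finset.univ) (w := fun _ : S => n⁻¹) (p := fun s => pr q X s)
    (fun _ _ => by positivity)
    (by rw [Finset.sum_const, Finset.card_univ, nsmul_eq_mul, ← hn]; field_simp)
    (fun s _ => Set.mem_Ici.mpr (pr_nonneg q hq X s))
  simp only [smul_eq_mul] at hj
  rw [← Finset.mul_sum, ← Finset.mul_sum, sum_pr q X, hq1, mul_one] at hj
  have hlast : Real.negMulLog n⁻¹ = n⁻¹ * Real.log n := by
    rw [Real.negMulLog, Real.log_inv]; ring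
  rw [hlast] at hj
  calc ent q X = n * (n⁻¹ * ent q X) := by field_simp
    _ ≤ n * (n⁻¹ * Real.log n) := by
        apply mul_le_mul_of_nonneg_left _ (le_of_lt hnpos)
        exact hj
    _ = Real.log n := by field_simp

variable {Ω : Type*} [Fintype Ω]

lemma splitMap_injective {A : Type*} {S : A → Type*} (t : A) :
    Function.Injective (fun x : ∀ α, S α =>
      ((x t, fun β : {β : A // β ≠ t} => x β.1) : S t × ∀ β : {β : A // β ≠ t}, S β.1)) := by
  intro x y h
  funext i
  by_cases hi : i = t
  · subst hi; exact congrArg Prod.fst h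
  · exact congrFun (congrArg Prod.snd h) ⟨i, hi⟩

lemma condEnt_rest {A : Type*} [Fintype A] {S : A → Type*} [∀ α, Fintype (S α)]
    (q : Ω → ℝ) (Y : ∀ α, Ω → S α) (t : A) :
    condEnt q (Y t) (restVar Y t) = ent q (jointVar Y) - ent q (restVar Y t) := by
  unfold condEnt
  congr 1
  exact ent_comp_eq q (jointVar Y)
    (fun x => (x t, fun β : {β : A // β ≠ t} => x β.1)) (splitMap_injective t)

lemma exists_unique_fin_mod {K : ℕ} (hK : 0 < K) (m : Fin K) (S : ℕ) :
    ∃! c : Fin K, ((c : ℕ) + S) % K = (m : ℕ) := by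
  have h1 : S % K < K := Nat.mod_lt _ hK
  have hex : ((((m : ℕ) + (K - S % K)) % K) + S) % K = (m : ℕ) := by
    rw [Nat.mod_add_mod, Nat.add_mod _ S K, Nat.mod_add_mod]
    have h2 : (m : ℕ) + (K - S % K) + S % K = (m : ℕ) + K := by omega
    rw [h2, Nat.add_mod_right]
    exact Nat.mod_eq_of_lt m.isLt
  refine ⟨⟨_, Nat.mod_lt _ hK⟩, hex, ?_⟩
  intro c hc
  have h2 : (c : ℕ) % K = (((m : ℕ) + (K - S % K)) % K) % K :=
    Nat.ModEq.add_right_cancel' S (hc.trans hex.symm)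
  exact Fin.ext ((Nat.mod_eq_of_lt c.isLt).symm.trans (h2.trans (Nat.mod_mod_of_dvd _ dvd_rfl)))

lemma sum_split {K N : ℕ} (t : Fin N) (x : Fin N → Fin K) :
    (∑ i, ((x i : ℕ))) = (x t : ℕ) + ∑ β : {β : Fin N // β ≠ t}, ((x β.1 : ℕ)) := by
  rw [← Finset.add_sum_erase Finset.univ _ (Finset.mem_univ t)]
  congr 1
  exact Finset.sum_subtype (Finset.univ.erase t) (by simp) (fun i => ((x i : ℕ)))

lemma pr_rest_modP (K N : ℕ) (hK : 2 ≤ K) (m : Fin K) (t : Fin N)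
    (r : ∀ β : {β : Fin N // β ≠ t}, Fin K) :
    pr (modP K N m) (restVar (fun (i : Fin N) (x : Fin N → Fin K) => x i) t) r
      = ((K : ℝ) ^ (N - 1))⁻¹ := by
  unfold pr restVar
  have key : (∑ x : Fin N → Fin K,
      if (fun β : {β : Fin N // β ≠ t} => x β.1) = r then modP K N m x else 0)
    = ((K : ℝ) ^ (N - 1))⁻¹ := by
   rw [Fintype.sum_equiv (Equiv.piSplitAt t (fun _ : Fin N => Fin K))
    (fun x : Fin N → Fin K =>
      if (fun β : {β : Fin N // β ≠ t} => x β.1) = r then modP K N m x else 0)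
    (fun p : Fin K × (∀ β : {β : Fin N // β ≠ t}, Fin K) =>
      if p.2 = r then
        (if ((p.1 : ℕ) + ∑ β : {β : Fin N // β ≠ t}, ((p.2 β : ℕ))) % K = (m : ℕ)
          then ((K : ℝ) ^ (N - 1))⁻¹ else 0)
      else 0)
    (fun x => by
      simp only [Equiv.piSplitAt_apply, modP]
      rw [sum_split t x])]
   rw [Fintype.sum_prod_type]
   have hinner : ∀ c : Fin K,
      (∑ r' : ∀ β : {β : Fin N // β ≠ t}, Fin K,
        if r' = r then
          (if ((c : ℕ) + ∑ β : {β : Fin N // β ≠ t}, ((r' β : ℕ))) % K = (m : ℕ)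
            then ((K : ℝ) ^ (N - 1))⁻¹ else 0)
        else 0)
      = (if ((c : ℕ) + ∑ β : {β : Fin N // β ≠ t}, ((r β : ℕ))) % K = (m : ℕ)
            then ((K : ℝ) ^ (N - 1))⁻¹ else 0) := by
     intro c
     rw [Finset.sum_ite_eq' Finset.univ r]
     simp
   simp only [hinner]
   obtain ⟨c₀, hc₀, hun⟩ := exists_unique_fin_mod (by omega) m
     (∑ β : {β : Fin N // β ≠ t}, ((r β : ℕ)))
   rw [Finset.sum_eq_single_of_mem c₀ (Finset.mem_univ _)
     (fun b _ hb => if_neg fun h => hb (hun b h))]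
   exact if_pos hc₀
  rw [← key]
  exact Finset.sum_congr rfl fun x _ => by congr


lemma pr_id {Ω : Type*} [Fintype Ω] (p : Ω → ℝ) (X : Ω → Ω) (hX : ∀ ω, X ω = ω)
    (s : Ω) : pr p X s = p s := by
  unfold pr
  have h : ∀ ω, (if X ω = s then p ω else 0) = (if ω = s then p ω else 0) := by
    intro ω; rw [hX ω]
  rw [Finset.sum_congr rfl fun ω _ => h ω]
  rw [Finset.sum_eq_single_of_mem s (Finset.mem_univ s) fun b _ hb => if_neg hb]
  exact if_pos rfl

lemma ent_irrel {Ω : Type*} {iΩ iΩ' : Fintype Ω} (q : Ω → ℝ) {S : Type*}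
    {iS iS' : Fintype S} (X : Ω → S) :
    @ent Ω iΩ q S iS X = @ent Ω iΩ' q S iS' X := by
  cases Subsingleton.elim iΩ iΩ'
  cases Subsingleton.elim iS iS'
  rfl

lemma card_rest {K N : ℕ} (t : Fin N) :
    Fintype.card (∀ β : {β : Fin N // β ≠ t}, Fin K) = K ^ (N - 1) := by
  rw [Fintype.card_pi, Finset.prod_const, Fintype.card_fin, Finset.card_univ]
  congr 1
  rw [Fintype.card_subtype_compl, Fintype.card_subtype_eq, Fintype.card_fin]

lemma sum_modP (K N : ℕ) (hK : 2 ≤ K) (hN : 1 ≤ N) (m : Fin K) :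
    ∑ x, modP K N m x = 1 := by
  have t : Fin N := ⟨0, hN⟩
  rw [← sum_pr (modP K N m) (restVar (fun (i : Fin N) (x : Fin N → Fin K) => x i) t)]
  rw [Finset.sum_congr rfl fun r _ => pr_rest_modP K N hK m t r]
  rw [Finset.sum_const, Finset.card_univ, card_rest, nsmul_eq_mul]
  push_cast
  rw [mul_inv_cancel₀ (by positivity)]

lemma negMulLog_cinv (K N : ℕ) (hK : 2 ≤ K) (hN : 1 ≤ N) :
    Real.negMulLog ((K : ℝ) ^ (N - 1))⁻¹
      = ((K : ℝ) ^ (N - 1))⁻¹ * (((N : ℝ) - 1) * Real.log K) := by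
  rw [Real.negMulLog, Real.log_inv, Real.log_pow]
  have h : ((N - 1 : ℕ) : ℝ) = (N : ℝ) - 1 := by
    rw [Nat.cast_sub hN]; norm_num
  rw [h]; ring

lemma negMulLog_modP (K N : ℕ) (hK : 2 ≤ K) (hN : 1 ≤ N) (m : Fin K) (x : Fin N → Fin K) :
    Real.negMulLog (modP K N m x) = modP K N m x * (((N : ℝ) - 1) * Real.log K) := by
  unfold modP
  split_ifs with h
  · exact negMulLog_cinv K N hK hN
  · simp

lemma ent_joint_modP (K N : ℕ) (hK : 2 ≤ K) (hN : 1 ≤ N) (m : Fin K) :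
    ent (modP K N m) (jointVar (fun (i : Fin N) (x : Fin N → Fin K) => x i))
      = ((N : ℝ) - 1) * Real.log K := by
  unfold ent
  have hpr : ∀ s, pr (modP K N m)
      (jointVar (fun (i : Fin N) (x : Fin N → Fin K) => x i)) s = modP K N m s := by
    intro s
    exact pr_id (modP K N m) _ (fun ω => rfl) s
  rw [Finset.sum_congr rfl fun s _ => by rw [hpr s, negMulLog_modP K N hK hN m s]]
  rw [← Finset.sum_mul, sum_modP K N hK hN m, one_mul]

lemma ent_rest_modP (K N : ℕ) (hK : 2 ≤ K) (hN : 1 ≤ N) (m : Fin K) (t : Fin N) :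
    ent (modP K N m) (restVar (fun (i : Fin N) (x : Fin N → Fin K) => x i) t)
      = ((N : ℝ) - 1) * Real.log K := by
  unfold ent
  rw [Finset.sum_congr rfl fun r _ => by
    rw [pr_rest_modP K N hK m t r, negMulLog_cinv K N hK hN]]
  rw [Finset.sum_const, Finset.card_univ, card_rest, nsmul_eq_mul]
  push_cast
  rw [← mul_assoc, mul_inv_cancel₀ (by positivity), one_mul]

end Aux

set_option maxHeartbeats 2000000 in
/-- the modulo-`K` process attains the maximal binding information
`(N-1) log K`, and no family of `N` variables over an alphabet of size `K`
exceeds this bound. -/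
theorem bindingInfo_modP_max (K N : ℕ) (hK : 2 ≤ K) (hN : 1 ≤ N) (m : Fin K) :
    bindingInfo (modP K N m) (fun (i : Fin N) (x : Fin N → Fin K) => x i)
        = ((N : ℝ) - 1) * Real.log K ∧
      ∀ (Ω : Type) [Fintype Ω] (q : Ω → ℝ), (∀ ω, 0 ≤ q ω) → (∑ ω, q ω = 1) →
        ∀ Y : Fin N → Ω → Fin K,
          bindingInfo q (fun i => Y i) ≤ ((N : ℝ) - 1) * Real.log K := by
  constructor
  · unfold bindingInfo
    rw [Finset.sum_congr rfl fun t (_ : t ∈ Finset.univ) =>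
      condEnt_rest (modP K N m) (fun (i : Fin N) (x : Fin N → Fin K) => x i) t]
    have key : ent (modP K N m) (jointVar (fun (i : Fin N) (x : Fin N → Fin K) => x i))
        - ∑ t : Fin N,
            (ent (modP K N m) (jointVar (fun (i : Fin N) (x : Fin N → Fin K) => x i))
              - ent (modP K N m) (restVar (fun (i : Fin N) (x : Fin N → Fin K) => x i) t))
        = ((N : ℝ) - 1) * Real.log K := by
      rw [Finset.sum_congr rfl fun t (_ : t ∈ Finset.univ) => by
        rw [ent_joint_modP K N hK hN m, ent_rest_modP K N hK hN m t]]
      rw [ent_joint_modP K N hK hN m]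
      simp
    refine Eq.trans ?_ key
    congr 1
    · exact ent_irrel _ _
    · exact Finset.sum_congr rfl fun t _ => by
        congr 1 <;> exact ent_irrel _ _
  · intro Ω _ q hq hq1 Y
    have hnonempty : Nonempty (Fin K) := ⟨⟨0, by omega⟩⟩
    unfold bindingInfo
    rw [Finset.sum_congr rfl fun t (_ : t ∈ Finset.univ) =>
      condEnt_rest q (fun i => Y i) t]
    refine le_of_eq_of_le (b := ent q (jointVar fun i => Y i)
      - ∑ t : Fin N, (ent q (jointVar fun i => Y i)
          - ent q (restVar (fun i => Y i) t))) ?_ ?_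
    · congr 1
      · exact ent_irrel _ _
      · exact Finset.sum_congr rfl fun t _ => by
          congr 1 <;> exact ent_irrel _ _
    set H := ent q (jointVar fun i => Y i) with hH
    set L := ((N : ℝ) - 1) * Real.log K with hL
    have hHt_le_H : ∀ t : Fin N, ent q (restVar (fun i => Y i) t) ≤ H := fun t =>
      ent_comp_le q hq (jointVar fun i => Y i)
        (fun x (β : {β : Fin N // β ≠ t}) => x β.1)
    have hHt_le_L : ∀ t : Fin N, ent q (restVar (fun i => Y i) t) ≤ L := by
      intro t
      have h := ent_le_log_card q hq hq1 (restVar (fun i => Y i) t)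
      rw [card_rest] at h
      refine h.trans_eq ?_
      push_cast
      rw [Real.log_pow, hL, Nat.cast_sub hN]
      norm_num
    have hH0 : 0 ≤ H := ent_nonneg q hq hq1 _
    have hsum : ∑ t : Fin N, (H - ent q (restVar (fun i => Y i) t))
        = (N : ℝ) * H - ∑ t : Fin N, ent q (restVar (fun i => Y i) t) := by
      rw [Finset.sum_sub_distrib, Finset.sum_const, Finset.card_univ,
        Fintype.card_fin, nsmul_eq_mul]
    rw [hsum]
    set R := ∑ t : Fin N, ent q (restVar (fun i => Y i) t) with hR
    have hR_le_NH : R ≤ (N : ℝ) * H := by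
      rw [hR]
      calc ∑ t : Fin N, ent q (restVar (fun i => Y i) t) ≤ ∑ _t : Fin N, H :=
            Finset.sum_le_sum fun t _ => hHt_le_H t
        _ = (N : ℝ) * H := by
            rw [Finset.sum_const, Finset.card_univ, Fintype.card_fin, nsmul_eq_mul]
    have hR_le_NL : R ≤ (N : ℝ) * L := by
      rw [hR]
      calc ∑ t : Fin N, ent q (restVar (fun i => Y i) t) ≤ ∑ _t : Fin N, L :=
            Finset.sum_le_sum fun t _ => hHt_le_L t
        _ = (N : ℝ) * L := by
            rw [Finset.sum_const, Finset.card_univ, Fintype.card_fin, nsmul_eq_mul]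
    have hN1 : (1 : ℝ) ≤ (N : ℝ) := by exact_mod_cast hN
    rcases le_total H L with hc | hc
    · linarith
    · linarith [mul_le_mul_of_nonneg_left hc (by linarith : (0:ℝ) ≤ (N : ℝ) - 1)]
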